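/- Any sum Σ_{j=1}^{N} c_j H_{n+j}(z) with N = 2m and complex coefficients c_j can be written as q_{m,1}(z) H_{n+m+1}(z) + q_{m,2}(z) H_{n+m}(z) with polynomials q_{m,1}, q_{m,2} of degree ≤ m-1; moreover, as the c_j range over all of ℂ^N, the pair (q_{m,1}, q_{m,2}) ranges over all pairs of polynomials of degree ≤ m-1. -/

import Mathlib

/-!
A solution `h` of the recurrence `h (k + 2) = 2 z h (k + 1) - h k` can be expanded around any two
consecutive indices with the Chebyshev polynomials of the second kind, in both directions:
`h (a + k + 1) = U_k h (a + 1) - U_{k-1} h a` and `h a = U_k h (a + k) - U_{k-1} h (a + k + 1)`.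
Expanding the `2m` terms around `n + m` and `n + m + 1` gives `q₁ = Σ f_i U_i - g_i U_{i-1}` and
`q₂ = Σ g_i U_i - f_i U_{i-1}`, where `f` is the upper half of `c` and `g` its lower half read
backwards. Conversely, `q₁ + q₂` and `q₁ - q₂` are combinations of `U_i - U_{i-1}` and
`U_i + U_{i-1}` respectively; both families have degree `i` and leading coefficient `2 ^ i`, so
each spans the polynomials of degree `< m`.
-/

open Polynomial Polynomial.Chebyshev Finset

section Recurrence

variable {R : Type*} [CommRing R]

def IsChebyshevRecurrent (z : R) (h : ℕ → R) : Prop :=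
  ∀ k, h (k + 2) = 2 * z * h (k + 1) - h k

theorem eval_U_natCast_succ (z : R) (k : ℕ) :
    (U R ((k + 1 : ℕ) : ℤ)).eval z = 2 * z * (U R k).eval z - (U R ((k : ℤ) - 1)).eval z := by
  simp [U_add_one]

namespace IsChebyshevRecurrent

variable {z : R} {h : ℕ → R}

theorem apply_add_add_one_eq_eval_U (hh : IsChebyshevRecurrent z h) (a k : ℕ) :
    h (a + k + 1) = (U R k).eval z * h (a + 1) - (U R ((k : ℤ) - 1)).eval z * h a := by
  induction k generalizing a with
  | zero => simp
  | succ k ih =>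
    rw [show a + (k + 1) + 1 = (a + 1) + k + 1 by ring, ih, hh, eval_U_natCast_succ,
      show ((k + 1 : ℕ) : ℤ) - 1 = k by push_cast; ring]
    ring

theorem apply_eq_eval_U (hh : IsChebyshevRecurrent z h) (a k : ℕ) :
    h a = (U R k).eval z * h (a + k) - (U R ((k : ℤ) - 1)).eval z * h (a + k + 1) := by
  induction k with
  | zero => simp
  | succ k ih =>
    have hk : h (a + k) = 2 * z * h (a + k + 1) - h (a + k + 2) := by rw [hh]; ring
    rw [ih, hk, eval_U_natCast_succ, show ((k + 1 : ℕ) : ℤ) - 1 = k by push_cast; ring,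
      show a + (k + 1) = a + k + 1 by ring]
    ring

end IsChebyshevRecurrent

noncomputable def chebyshevUComb (m : ℕ) (f g : ℕ → R) : R[X] :=
  ∑ i ∈ range m, (f i • U R i - g i • U R ((i : ℤ) - 1))

theorem chebyshevUComb_congr {m : ℕ} {f f' g g' : ℕ → R} (hf : ∀ i < m, f i = f' i)
    (hg : ∀ i < m, g i = g' i) : chebyshevUComb m f g = chebyshevUComb m f' g' :=
  sum_congr rfl fun i hi => by rw [hf i (mem_range.1 hi), hg i (mem_range.1 hi)]

theorem IsChebyshevRecurrent.sum_eq_chebyshevUComb {z : R} {h : ℕ → R}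
    (hh : IsChebyshevRecurrent z h) (c : ℕ → R) (m n : ℕ) :
    ∑ j ∈ range (2 * m), c j * h (n + j + 1) =
      (chebyshevUComb m (fun i => c (m + i)) (fun i => c (m - 1 - i))).eval z * h (n + m + 1) +
      (chebyshevUComb m (fun i => c (m - 1 - i)) (fun i => c (m + i))).eval z * h (n + m) := by
  have lower : ∑ j ∈ range m, c j * h (n + j + 1) = ∑ i ∈ range m, c (m - 1 - i) *
      ((U R i).eval z * h (n + m) - (U R ((i : ℤ) - 1)).eval z * h (n + m + 1)) := by
    rw [← sum_range_reflect]
    refine sum_congr rfl fun i hi => ?_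
    have hi := mem_range.1 hi
    rw [hh.apply_eq_eval_U _ i, show n + (m - 1 - i) + 1 + i = n + m by omega]
  have upper : ∑ i ∈ range m, c (m + i) * h (n + (m + i) + 1) = ∑ i ∈ range m, c (m + i) *
      ((U R i).eval z * h (n + m + 1) - (U R ((i : ℤ) - 1)).eval z * h (n + m)) := by
    refine sum_congr rfl fun i _ => ?_
    rw [← hh.apply_add_add_one_eq_eval_U, show n + m + i + 1 = n + (m + i) + 1 by ring]
  rw [two_mul, sum_range_add, lower, upper, chebyshevUComb, chebyshevUComb, eval_finsetSum,
    eval_finsetSum, sum_mul, sum_mul, ← sum_add_distrib, ← sum_add_distrib]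
  refine sum_congr rfl fun i _ => ?_
  simp only [eval_sub, eval_smul, smul_eq_mul]
  ring

end Recurrence

section Field

variable {K : Type*} [Field K]

theorem Polynomial.Sequence.exists_sum_smul_eq_of_mem_degreeLT (S : Sequence K) {m : ℕ}
    (hS : ∀ i < m, (S i).leadingCoeff ≠ 0) {p : K[X]} (hp : p ∈ degreeLT K m) :
    ∃ a : ℕ → K, ∑ i ∈ range m, a i • S i = p := by
  rw [← S.span_degreeLT fun i hi => (hS i hi).isUnit, ← coe_range] at hp
  exact (Submodule.mem_span_image_finset_iff_exists_fun' K).1 hp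

theorem mem_degreeLT_iff_natDegree_le_pred {m : ℕ} (hm : 1 ≤ m) {p : K[X]} :
    p ∈ degreeLT K m ↔ p.natDegree ≤ m - 1 := by
  obtain ⟨k, rfl⟩ := Nat.exists_eq_add_of_le' hm
  rw [degreeLT_succ_eq_degreeLE, mem_degreeLE, natDegree_le_iff_degree_le, Nat.add_sub_cancel]

variable [NeZero (2 : K)]

theorem degree_U_sub_one_lt (i : ℕ) : (U K ((i : ℤ) - 1)).degree < i := by
  cases i with
  | zero => simp
  | succ k =>
    simp only [Nat.cast_add, Nat.cast_one, add_sub_cancel_right, degree_U_natCast]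
    exact_mod_cast k.lt_succ_self

theorem chebyshevUComb_mem_degreeLT (m : ℕ) (f g : ℕ → K) :
    chebyshevUComb m f g ∈ degreeLT K m := by
  refine Submodule.sum_mem _ fun i hi => Submodule.sub_mem _ (Submodule.smul_mem _ _ ?_)
    (Submodule.smul_mem _ _ ?_) <;> rw [mem_degreeLT]
  · exact_mod_cast (degree_U_natCast K i).trans_lt (by exact_mod_cast mem_range.1 hi)
  · exact (degree_U_sub_one_lt i).trans (by exact_mod_cast mem_range.1 hi)

theorem degree_U_add_smul_U_sub_one (ε : K) (i : ℕ) :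
    (U K i + ε • U K ((i : ℤ) - 1)).degree = i := by
  rw [degree_add_eq_left_of_degree_lt] <;> rw [degree_U_natCast]
  exact (degree_smul_le _ _).trans_lt (degree_U_sub_one_lt i)

noncomputable def chebyshevUSequence (ε : K) : Sequence K where
  elems' i := U K i + ε • U K ((i : ℤ) - 1)
  degree_eq' := degree_U_add_smul_U_sub_one ε

theorem chebyshevUSequence_apply (ε : K) (i : ℕ) :
    chebyshevUSequence ε i = U K i + ε • U K ((i : ℤ) - 1) := rfl

theorem leadingCoeff_chebyshevUSequence (ε : K) (i : ℕ) :
    (chebyshevUSequence ε i).leadingCoeff = 2 ^ i := by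
  rw [← leadingCoeff_U_natCast K i]
  refine leadingCoeff_add_of_degree_lt' ?_
  rw [degree_U_natCast]
  exact (degree_smul_le _ _).trans_lt (degree_U_sub_one_lt i)

theorem exists_chebyshevUComb_eq {m : ℕ} {q₁ q₂ : K[X]} (h₁ : q₁ ∈ degreeLT K m)
    (h₂ : q₂ ∈ degreeLT K m) :
    ∃ f g : ℕ → K, chebyshevUComb m f g = q₁ ∧ chebyshevUComb m g f = q₂ := by
  have hS (ε : K) : ∀ i < m, (chebyshevUSequence ε i).leadingCoeff ≠ 0 := fun i _ => by
    simp [leadingCoeff_chebyshevUSequence, two_ne_zero]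
  obtain ⟨a, ha⟩ := (chebyshevUSequence (-1)).exists_sum_smul_eq_of_mem_degreeLT (hS _)
    (Submodule.add_mem _ h₁ h₂)
  obtain ⟨b, hb⟩ := (chebyshevUSequence 1).exists_sum_smul_eq_of_mem_degreeLT (hS _)
    (Submodule.sub_mem _ h₁ h₂)
  refine ⟨fun i => (a i + b i) / 2, fun i => (a i - b i) / 2, ?_, ?_⟩
  · calc chebyshevUComb m _ _
        = (2 : K)⁻¹ • (∑ i ∈ range m, a i • chebyshevUSequence (-1) i +
            ∑ i ∈ range m, b i • chebyshevUSequence 1 i) := by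
          rw [chebyshevUComb, ← sum_add_distrib, smul_sum]
          refine sum_congr rfl fun i _ => ?_
          simp only [chebyshevUSequence_apply]
          module
      _ = q₁ := by rw [ha, hb]; match_scalars <;> field_simp <;> ring
  · calc chebyshevUComb m _ _
        = (2 : K)⁻¹ • (∑ i ∈ range m, a i • chebyshevUSequence (-1) i -
            ∑ i ∈ range m, b i • chebyshevUSequence 1 i) := by
          rw [chebyshevUComb, ← sum_sub_distrib, smul_sum]
          refine sum_congr rfl fun i _ => ?_
          simp only [chebyshevUSequence_apply]
          module
      _ = q₂ := by rw [ha, hb]; match_scalars <;> field_simp <;> ring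

end Field

theorem stmt17_general (segE : Set ℂ)
    (H : ℕ → ℂ → ℂ)
    (hHrec : ∀ k : ℕ, ∀ z ∉ segE, H (k + 2) z = 2 * z * H (k + 1) z - H k z)
    (n m : ℕ) (hm : 1 ≤ m) :
    (∀ c : Fin (2 * m) → ℂ, ∃ q₁ q₂ : Polynomial ℂ,
      q₁.natDegree ≤ m - 1 ∧ q₂.natDegree ≤ m - 1 ∧
      ∀ z ∉ segE, ∑ j : Fin (2 * m), c j * H (n + (j : ℕ) + 1) z
        = q₁.eval z * H (n + m + 1) z + q₂.eval z * H (n + m) z) ∧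
    (∀ q₁ q₂ : Polynomial ℂ, q₁.natDegree ≤ m - 1 → q₂.natDegree ≤ m - 1 →
      ∃ c : Fin (2 * m) → ℂ,
      ∀ z ∉ segE, ∑ j : Fin (2 * m), c j * H (n + (j : ℕ) + 1) z
        = q₁.eval z * H (n + m + 1) z + q₂.eval z * H (n + m) z) := by
  have hrec (z : ℂ) (hz : z ∉ segE) : IsChebyshevRecurrent z fun k => H k z :=
    fun k => hHrec k z hz
  simp only [← mem_degreeLT_iff_natDegree_le_pred hm]
  constructor
  · intro c
    set c' : ℕ → ℂ := fun j => if h : j < 2 * m then c ⟨j, h⟩ else 0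
    refine ⟨_, _, chebyshevUComb_mem_degreeLT m (fun i => c' (m + i)) (fun i => c' (m - 1 - i)),
      chebyshevUComb_mem_degreeLT m (fun i => c' (m - 1 - i)) (fun i => c' (m + i)),
      fun z hz => ?_⟩
    rw [← (hrec z hz).sum_eq_chebyshevUComb c' m n,
      ← Fin.sum_univ_eq_sum_range (fun j => c' j * H (n + j + 1) z)]
    simp [c']
  · intro q₁ q₂ h₁ h₂
    obtain ⟨f, g, rfl, rfl⟩ := exists_chebyshevUComb_eq h₁ h₂
    set d : ℕ → ℂ := fun j => if j < m then g (m - 1 - j) else f (j - m)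
    have hf : ∀ i < m, d (m + i) = f i := fun i _ => by simp [d]
    have hg : ∀ i < m, d (m - 1 - i) = g i := fun i hi => by
      simp only [d, if_pos (show m - 1 - i < m by omega), show m - 1 - (m - 1 - i) = i by omega]
    refine ⟨fun j => d j, fun z hz => ?_⟩
    rw [Fin.sum_univ_eq_sum_range (fun j => d j * H (n + j + 1) z),
      (hrec z hz).sum_eq_chebyshevUComb, chebyshevUComb_congr hf hg, chebyshevUComb_congr hg hf]

/-- Relation (30): any sum `Σ_{j=1}^{N} c_j H_{n+j}` with `N = 2m`, where the second kind
functions `H_k` satisfy the recurrence `H_{k+2} = 2z H_{k+1} - H_k` (with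
`H_{-1} ≡ 1`, `H_0(z) = (z²-1)^{-1/2}`), can be written as
`q_{m,1}(z) H_{n+m+1}(z) + q_{m,2}(z) H_{n+m}(z)` with `deg q_{m,i} ≤ m-1`; moreover, as
the `c_j` range over `ℂ^N`, the pairs `(q_{m,1}, q_{m,2})` range over all pairs of
polynomials of degree `≤ m-1`. -/
theorem stmt17 (segE : Set ℂ) (hsegE : segE = Complex.ofReal '' Set.Icc (-1 : ℝ) 1)
    (s : ℂ → ℂ) (hs : ∀ z ∉ segE, (s z) ^ 2 = z ^ 2 - 1)
    (H : ℕ → ℂ → ℂ)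
    (hH0 : ∀ z ∉ segE, H 0 z = (s z)⁻¹)
    (hHrec : ∀ k : ℕ, ∀ z ∉ segE, H (k + 2) z = 2 * z * H (k + 1) z - H k z)
    (n m : ℕ) (hm : 1 ≤ m) :
    (∀ c : Fin (2 * m) → ℂ, ∃ q₁ q₂ : Polynomial ℂ,
      q₁.natDegree ≤ m - 1 ∧ q₂.natDegree ≤ m - 1 ∧
      ∀ z ∉ segE, ∑ j : Fin (2 * m), c j * H (n + (j : ℕ) + 1) z
        = q₁.eval z * H (n + m + 1) z + q₂.eval z * H (n + m) z) ∧
    (∀ q₁ q₂ : Polynomial ℂ, q₁.natDegree ≤ m - 1 → q₂.natDegree ≤ m - 1 →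
      ∃ c : Fin (2 * m) → ℂ,
      ∀ z ∉ segE, ∑ j : Fin (2 * m), c j * H (n + (j : ℕ) + 1) z
        = q₁.eval z * H (n + m + 1) z + q₂.eval z * H (n + m) z) :=
  stmt17_general segE H hHrec n m hm
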